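/- arXiv:math/0409390 — 3 statements merged into one kernel-verified Lean document; each statement's English description precedes it below -/
import Mathlib

section
/- Suppose for p ≥ 2 and c > 0 the set N_p^c exists, and for every c' ≤ c the set N_p^{c'} has the star property: for all x ∈ N_p^{c'} and λ ∈ [0,1), λx ∈ Int(N_p^{c'}). Then V_p is radially strictly increasing on N_p^c: for x⁰ ∈ ∂N_p^c and 0 < λ₁ < λ₂ ≤ 1, V_p(λ₁ x⁰) < V_p(λ₂ x⁰). -/
noncomputable section

open Filter Metric
open scoped RealInnerProductSpace

/-- `x` is a solution of the autonomous system `ẋ = f(x)` on `[0, ∞)`. -/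
def IsSolOn {E : Type*} [NormedAddCommGroup E] [NormedSpace ℝ E]
    (f : E → E) (x : ℝ → E) : Prop :=
  ∀ t ∈ Set.Ici (0:ℝ), HasDerivWithinAt x (f (x t)) (Set.Ici 0) t

/-- The domain of attraction of the zero steady state. -/
def domAttr {E : Type*} [NormedAddCommGroup E] [NormedSpace ℝ E]
    (f : E → E) : Set E :=
  {x0 | ∃ x : ℝ → E, x 0 = x0 ∧ IsSolOn f x ∧ Tendsto x atTop (nhds 0)}

/-- `S` is a set of the kind `N_p^c`: compact, connected, `0 ∈ Int S`, `V_p < c` on `Int S`,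
`V_p = c` on `∂S`, and `S ⊆ G_p`. -/
def IsNpc {n : ℕ} (Vp : EuclideanSpace ℝ (Fin n) → ℝ)
    (Gp : Set (EuclideanSpace ℝ (Fin n))) (c : ℝ)
    (S : Set (EuclideanSpace ℝ (Fin n))) : Prop :=
  IsCompact S ∧ IsConnected S ∧ (0 : EuclideanSpace ℝ (Fin n)) ∈ interior S ∧
    (∀ x ∈ interior S, Vp x < c) ∧ (∀ x ∈ frontier S, Vp x = c) ∧ S ⊆ Gp

theorem Vp_radially_increasing_on_Npc_of_star_property {n : ℕ}
    (f : EuclideanSpace ℝ (Fin n) → EuclideanSpace ℝ (Fin n))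
    (hf : ContDiff ℝ 1 f) (hf0 : f 0 = 0)
    (Vp : EuclideanSpace ℝ (Fin n) → ℝ) (hVp : ContDiff ℝ 1 Vp) (hVp0 : Vp 0 = 0)
    (Gp : Set (EuclideanSpace ℝ (Fin n))) (hGpopen : IsOpen Gp)
    (h0Gp : (0 : EuclideanSpace ℝ (Fin n)) ∈ Gp)
    (hLyap : ∀ x ∈ Gp, x ≠ 0 → 0 < Vp x ∧ ⟪gradient Vp x, f x⟫ < 0)
    (p : ℕ) (hp : 2 ≤ p) (c : ℝ) (hc : 0 < c)
    -- the set N_p^c exists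
    (N : Set (EuclideanSpace ℝ (Fin n))) (hN : IsNpc Vp Gp c N)
    -- sublevel characterization: for 0 < c' ≤ c, N_p^{c'} = {x ∈ N_p^c : Vp x ≤ c'}
    (hsub : ∀ c' : ℝ, 0 < c' → c' ≤ c → IsNpc Vp Gp c' {x ∈ N | Vp x ≤ c'})
    -- monotonicity characterization: N_p^{c₁} ⊆ N_p^{c₂} iff c₁ ≤ c₂
    (hmono : ∀ c₁ c₂ : ℝ, 0 < c₁ → c₁ ≤ c → 0 < c₂ → c₂ ≤ c →
      ∀ S₁ S₂ : Set (EuclideanSpace ℝ (Fin n)),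
        IsNpc Vp Gp c₁ S₁ → IsNpc Vp Gp c₂ S₂ → (S₁ ⊆ S₂ ↔ c₁ ≤ c₂))
    -- star property of all the sets N_p^{c'}, c' ≤ c
    (hstar : ∀ c' : ℝ, 0 < c' → c' ≤ c →
      ∀ S : Set (EuclideanSpace ℝ (Fin n)), IsNpc Vp Gp c' S →
        ∀ x ∈ S, ∀ lam ∈ Set.Ico (0:ℝ) 1, lam • x ∈ interior S) :
    -- V_p is radially strictly increasing on N_p^c
    ∀ x0 ∈ frontier N, ∀ lam₁ lam₂ : ℝ, 0 < lam₁ → lam₁ < lam₂ → lam₂ ≤ 1 →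
      Vp (lam₁ • x0) < Vp (lam₂ • x0) := by
  intro x0 hx0 lam₁ lam₂ h1 h12 h21
  obtain ⟨hNc, hNconn, hN0, hNint, hNfr, hNG⟩ := hN
  have hx0N : x0 ∈ N := by
    have : frontier N ⊆ N :=
      hNc.isClosed.frontier_subset
    exact this hx0
  have hx0ne : x0 ≠ 0 := by
    intro h
    exact hx0.2 (h ▸ hN0)
  rcases eq_or_lt_of_le h21 with h21 | h21
  · -- lam₂ = 1
    have hy1 : lam₁ • x0 ∈ interior N :=
      hstar c hc le_rfl N ⟨hNc, hNconn, hN0, hNint, hNfr, hNG⟩ x0 hx0N lam₁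
        ⟨le_of_lt h1, lt_of_lt_of_le h12 h21.le⟩
    have := hNint _ hy1
    have hv2 : Vp (lam₂ • x0) = c := by
      rw [h21, one_smul]; exact hNfr x0 hx0
    rw [hv2]; exact this
  · -- lam₂ < 1
    have hy2 : lam₂ • x0 ∈ interior N :=
      hstar c hc le_rfl N ⟨hNc, hNconn, hN0, hNint, hNfr, hNG⟩ x0 hx0N lam₂
        ⟨le_of_lt (lt_trans h1 h12), h21⟩
    set y₂ := lam₂ • x0 with hy2def
    have hy2N : y₂ ∈ N := interior_subset hy2
    have hy2ne : y₂ ≠ 0 := smul_ne_zero (ne_of_gt (lt_trans h1 h12)) hx0ne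
    have hy2G : y₂ ∈ Gp := hNG hy2N
    have hc₂pos : 0 < Vp y₂ := (hLyap y₂ hy2G hy2ne).1
    have hc₂lt : Vp y₂ < c := hNint y₂ hy2
    set c₂ := Vp y₂ with hc₂def
    have hS₂ := hsub c₂ hc₂pos (le_of_lt hc₂lt)
    have hy2S₂ : y₂ ∈ {x ∈ N | Vp x ≤ c₂} := ⟨hy2N, le_rfl⟩
    have hlam : lam₁ / lam₂ ∈ Set.Ico (0:ℝ) 1 := by
      constructor
      · exact le_of_lt (div_pos h1 (lt_trans h1 h12))
      · rw [div_lt_one (lt_trans h1 h12)]; exact h12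
    have hy1 : (lam₁ / lam₂) • y₂ ∈ interior {x ∈ N | Vp x ≤ c₂} :=
      hstar c₂ hc₂pos (le_of_lt hc₂lt) _ hS₂ y₂ hy2S₂ _ hlam
    have heq : (lam₁ / lam₂) • y₂ = lam₁ • x0 := by
      rw [hy2def, smul_smul, div_mul_cancel₀]
      exact ne_of_gt (lt_trans h1 h12)
    have := hS₂.2.2.2.1 _ hy1
    rwa [heq] at this
end
end

section
/- For the planar system ẋ₁ = −λx₁ + ρx₁³ + ρx₁x₂², ẋ₂ = −λx₂ + ρx₁²x₂ + ρx₂³ with λ > 0 and ρ ∈ ℝ, the function V(x₁,x₂) = (1/(2ρ)) ln( λ / (λ − ρ(x₁²+x₂²)) ) (for ρ ≠ 0), defined on D = { x ∈ ℝ² : λ − ρ(x₁²+x₂²) > 0 }, satisfies ⟨∇V(x), f(x)⟩ = −(x₁²+x₂²) on D, with V(0)=0 and V > 0 on D ∖ {0}. -/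
/-!
The field is radial, `f x = -(λ - ρ‖x‖²) • x`, and so is `V = φ (‖x‖²)` with
`φ s = (1 / 2ρ) log (λ / (λ - ρ s))`. Since `φ' s = 1 / (2 (λ - ρ s))` and `∇‖x‖² = 2x`,
`∇V x = x / (λ - ρ‖x‖²)`, whose inner product with `f x` is `-‖x‖²`.
-/

noncomputable section

open scoped RealInnerProductSpace

namespace CubicLyapunov

open Real

-- `V x = profile lam ρ ‖x‖²` on `D`.
def profile (lam ρ s : ℝ) : ℝ := 1 / (2 * ρ) * log (lam / (lam - ρ * s))

@[simp]
lemma profile_zero (lam ρ : ℝ) : profile lam ρ 0 = 0 := by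
  rcases eq_or_ne lam 0 with rfl | hlam
  · simp [profile]
  · simp [profile, div_self hlam]

-- `log (lam / (lam - ρ s))` has the sign of `ρ`, which the prefactor `1 / (2ρ)` cancels.
lemma profile_pos {lam ρ s : ℝ} (hlam : 0 < lam) (hρ : ρ ≠ 0) (hs : 0 < s)
    (hD : 0 < lam - ρ * s) : 0 < profile lam ρ s := by
  unfold profile
  rcases hρ.lt_or_gt with hneg | hpos
  · refine mul_pos_of_neg_of_neg (one_div_neg.mpr (by linarith)) (log_neg (by positivity) ?_)
    rw [div_lt_one hD]
    nlinarith
  · refine mul_pos (by positivity) (log_pos ?_)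
    rw [one_lt_div hD]
    nlinarith

lemma hasDerivAt_profile {lam ρ s : ℝ} (hlam : lam ≠ 0) (hρ : ρ ≠ 0) (hD : lam - ρ * s ≠ 0) :
    HasDerivAt (profile lam ρ) (2 * (lam - ρ * s))⁻¹ s := by
  have hq : HasDerivAt (fun t => lam / (lam - ρ * t)) (lam * (ρ / (lam - ρ * s) ^ 2)) s := by
    simpa [div_eq_mul_inv] using
      ((hasDerivAt_id s).const_mul ρ |>.const_sub lam).fun_inv hD |>.const_mul lam
  refine ((hq.log (div_ne_zero hlam hD)).const_mul (1 / (2 * ρ))).congr_deriv ?_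
  field_simp

variable {E : Type*} [NormedAddCommGroup E] [InnerProductSpace ℝ E] [CompleteSpace E]

lemma hasGradientAt_profile_norm_sq {lam ρ : ℝ} {x : E} (hlam : lam ≠ 0) (hρ : ρ ≠ 0)
    (hD : lam - ρ * ‖x‖ ^ 2 ≠ 0) :
    HasGradientAt (fun y => profile lam ρ (‖y‖ ^ 2)) ((lam - ρ * ‖x‖ ^ 2)⁻¹ • x) x := by
  rw [hasGradientAt_iff_hasFDerivAt]
  refine ((hasDerivAt_profile hlam hρ hD).comp_hasFDerivAt x
    (hasStrictFDerivAt_norm_sq x).hasFDerivAt).congr_fderiv ?_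
  ext y
  simp only [smul_apply, coe_innerSL_apply, nsmul_eq_mul, Nat.cast_ofNat,
    smul_eq_mul, map_smul, InnerProductSpace.toDual_apply_apply]
  field_simp

lemma sq_add_sq_eq_norm_sq (x : EuclideanSpace ℝ (Fin 2)) : x 0 ^ 2 + x 1 ^ 2 = ‖x‖ ^ 2 := by
  simp [EuclideanSpace.real_norm_sq_eq, Fin.sum_univ_two]

lemma symmetricCubicField_eq_smul (lam ρ : ℝ) (x : EuclideanSpace ℝ (Fin 2)) :
    (WithLp.equiv 2 (Fin 2 → ℝ)).symm
        ![-lam * x 0 + ρ * x 0 ^ 3 + ρ * x 0 * x 1 ^ 2,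
          -lam * x 1 + ρ * x 0 ^ 2 * x 1 + ρ * x 1 ^ 3] =
      -(lam - ρ * ‖x‖ ^ 2) • x := by
  rw [← sq_add_sq_eq_norm_sq]
  ext i
  fin_cases i <;> simp <;> ring

end CubicLyapunov

open CubicLyapunov

theorem log_Lyapunov_function_for_symmetric_cubic_system
    (lam ρ : ℝ) (hlam : 0 < lam) (hρ : ρ ≠ 0)
    (f : EuclideanSpace ℝ (Fin 2) → EuclideanSpace ℝ (Fin 2))
    (hf : ∀ x : EuclideanSpace ℝ (Fin 2),
      f x = (WithLp.equiv 2 (Fin 2 → ℝ)).symm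
        ![-lam * x 0 + ρ * x 0 ^ 3 + ρ * x 0 * x 1 ^ 2,
          -lam * x 1 + ρ * x 0 ^ 2 * x 1 + ρ * x 1 ^ 3])
    (D : Set (EuclideanSpace ℝ (Fin 2)))
    (hD : D = {x : EuclideanSpace ℝ (Fin 2) | 0 < lam - ρ * (x 0 ^ 2 + x 1 ^ 2)})
    (V : EuclideanSpace ℝ (Fin 2) → ℝ)
    (hV : ∀ x ∈ D, V x = (1 / (2 * ρ)) * Real.log (lam / (lam - ρ * (x 0 ^ 2 + x 1 ^ 2)))) :
    V 0 = 0 ∧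
    (∀ x ∈ D, x ≠ 0 → 0 < V x) ∧
    (∀ x ∈ D, ⟪gradient V x, f x⟫ = -(x 0 ^ 2 + x 1 ^ 2)) := by
  simp only [sq_add_sq_eq_norm_sq] at hD hV ⊢
  subst hD
  have hV : ∀ x, 0 < lam - ρ * ‖x‖ ^ 2 → V x = profile lam ρ (‖x‖ ^ 2) := hV
  have h0 : 0 < lam - ρ * ‖(0 : EuclideanSpace ℝ (Fin 2))‖ ^ 2 := by simpa using hlam
  refine ⟨by simp [hV 0 h0], fun x hx hx0 => ?_, fun x hx => ?_⟩
  · rw [hV x hx]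
    exact profile_pos hlam hρ (by positivity) hx
  · have hx₀ : 0 < lam - ρ * ‖x‖ ^ 2 := hx
    have hVx : V =ᶠ[nhds x] fun y => profile lam ρ (‖y‖ ^ 2) :=
      Filter.eventually_of_mem ((isOpen_lt continuous_const (by fun_prop)).mem_nhds hx) hV
    rw [((hasGradientAt_profile_norm_sq hlam.ne' hρ hx₀.ne').congr_of_eventuallyEq hVx).gradient,
      hf, symmetricCubicField_eq_smul, real_inner_smul_left, real_inner_smul_right,
      real_inner_self_eq_norm_sq]
    field_simp
end
end

section
/- For the planar system ẋ₁ = −λx₁ + x₁(ρ₁x₁ + ρ₂x₂), ẋ₂ = −λx₂ + x₂(ρ₁x₁ + ρ₂x₂) with λ > 0 and ρ₁, ρ₂ ∈ ℝ, the half-plane H = { x ∈ ℝ² : ρ₁x₁ + ρ₂x₂ < λ } is positively invariant and equals the domain of attraction D_a(0) of the origin. -/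
noncomputable section

open Filter

/-!
The system is `ẋ = (ℓ x - λ) x` for the linear form `ℓ x = ρ₁ x₁ + ρ₂ x₂`, so every trajectory
stays on its ray through the origin and `u = ℓ ∘ x` obeys the Bernoulli equation
`u̇ = (u - λ) u`. Hence the gap `g = λ - u` satisfies `ġ = u g`, so
`g t = g 0 · exp (∫₀ᵗ u)` keeps its sign: this gives invariance of `H = {g > 0}`, and
since `g → λ > 0` along a trajectory converging to `0`, also `D_a(0) ⊆ H`. Conversely, from
`x₀ ∈ H` the explicit solution `x t = λ / ((λ - ℓ x₀) e^{λt} + ℓ x₀) • x₀` converges to `0`.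
-/

open intervalIntegral Set

theorem eq_mul_exp_integral_of_hasDerivWithinAt {u g : ℝ → ℝ} (hu : ContinuousOn u (Ici 0))
    (hg : ∀ t ∈ Ici (0:ℝ), HasDerivWithinAt g (u t * g t) (Ici 0) t) {t : ℝ} (ht : 0 ≤ t) :
    g t = g 0 * Real.exp (∫ s in (0:ℝ)..t, u s) := by
  set A : ℝ → ℝ := fun r => ∫ s in (0:ℝ)..r, u s
  have hint : ∀ r ∈ Ici (0:ℝ), IntervalIntegrable u MeasureTheory.volume 0 r := fun r hr =>
    (hu.mono (by rw [uIcc_of_le hr]; exact Icc_subset_Ici_self)).intervalIntegrable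
  have hA : ∀ r ∈ Ici (0:ℝ), HasDerivWithinAt A (u r) (Ici r) r := by
    intro r hr
    have hIoi : Ioi r ⊆ Ici 0 := fun y hy => mem_Ici.2 (le_trans hr (le_of_lt hy))
    exact integral_hasDerivWithinAt_right (hint r hr)
      ((hu.mono hIoi).stronglyMeasurableAtFilter_nhdsWithin measurableSet_Ioi r)
      ((hu r hr).mono hIoi)
  have hAc : ContinuousOn A (Icc 0 t) := by
    simpa [uIcc_of_le ht] using continuousOn_primitive_interval' (hint t ht) left_mem_uIcc
  have hgc : ContinuousOn g (Ici 0) := fun r hr => (hg r hr).continuousWithinAt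
  have hconst : ∀ r ∈ Icc (0:ℝ) t, g r * Real.exp (-A r) = g 0 * Real.exp (-A 0) := by
    refine constant_of_has_deriv_right_zero ((hgc.mono Icc_subset_Ici_self).mul hAc.neg.rexp)
      fun r hr => ?_
    have hg' := (hg r hr.1).mono (Ici_subset_Ici.2 hr.1)
    exact (hg'.mul (hA r hr.1).neg.exp).congr_deriv (by ring)
  have hA0 : A 0 = 0 := integral_same
  calc g t = g t * Real.exp (-A t) * Real.exp (A t) := by
        rw [mul_assoc, ← Real.exp_add, neg_add_cancel, Real.exp_zero, mul_one]
    _ = g 0 * Real.exp (A t) := by rw [hconst t ⟨ht, le_rfl⟩, hA0, neg_zero, Real.exp_zero, mul_one]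

theorem IsSolOn.continuousOn {E : Type*} [NormedAddCommGroup E] [NormedSpace ℝ E] {f : E → E}
    {x : ℝ → E} (hx : IsSolOn f x) : ContinuousOn x (Ici 0) :=
  fun t ht => (hx t ht).continuousWithinAt

section RadialScale

variable {lam c : ℝ}

def radialScale (lam c t : ℝ) : ℝ := lam / ((lam - c) * Real.exp (lam * t) + c)

theorem radialScale_zero (hlam : lam ≠ 0) : radialScale lam c 0 = 1 := by
  simp [radialScale, hlam]

theorem le_radialScale_denom (hlam : 0 ≤ lam) (hc : c < lam) {t : ℝ} (ht : 0 ≤ t) :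
    lam ≤ (lam - c) * Real.exp (lam * t) + c := by
  nlinarith [Real.one_le_exp (mul_nonneg hlam ht)]

theorem hasDerivAt_radialScale (hlam : 0 < lam) (hc : c < lam) {t : ℝ} (ht : 0 ≤ t) :
    HasDerivAt (radialScale lam c) ((c * radialScale lam c t - lam) * radialScale lam c t) t := by
  have hden : (lam - c) * Real.exp (lam * t) + c ≠ 0 :=
    (hlam.trans_le (le_radialScale_denom hlam.le hc ht)).ne'
  have hexp : HasDerivAt (fun s => Real.exp (lam * s)) (Real.exp (lam * t) * lam) t := by
    simpa using ((hasDerivAt_id t).const_mul lam).exp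
  refine ((hasDerivAt_const t lam).div ((hexp.const_mul (lam - c)).add_const c) hden).congr_deriv ?_
  simp only [radialScale]
  field_simp
  ring

theorem tendsto_radialScale_atTop (hlam : 0 < lam) (hc : c < lam) :
    Tendsto (radialScale lam c) atTop (nhds 0) :=
  tendsto_const_nhds.div_atTop <| tendsto_atTop_add_const_right _ c <|
    (Real.tendsto_exp_atTop.comp (tendsto_id.const_mul_atTop hlam)).const_mul_atTop (sub_pos.2 hc)

end RadialScale

section RadialField

variable {E : Type*} [NormedAddCommGroup E] [NormedSpace ℝ E]

def radialField (lam : ℝ) (ℓ : E →L[ℝ] ℝ) (x : E) : E := (ℓ x - lam) • x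

variable {lam : ℝ} {ℓ : E →L[ℝ] ℝ} {x : ℝ → E}

theorem IsSolOn.hasDerivWithinAt_sub_apply (hx : IsSolOn (radialField lam ℓ) x) {t : ℝ}
    (ht : 0 ≤ t) :
    HasDerivWithinAt (fun s => lam - ℓ (x s)) (ℓ (x t) * (lam - ℓ (x t))) (Ici 0) t := by
  refine ((ℓ.hasFDerivAt.comp_hasDerivWithinAt t (hx t ht)).const_sub lam).congr_deriv ?_
  simp only [radialField, map_smul, smul_eq_mul]
  ring

theorem IsSolOn.sub_apply_eq_mul_exp (hx : IsSolOn (radialField lam ℓ) x) {t : ℝ} (ht : 0 ≤ t) :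
    lam - ℓ (x t) = (lam - ℓ (x 0)) * Real.exp (∫ s in (0:ℝ)..t, ℓ (x s)) :=
  eq_mul_exp_integral_of_hasDerivWithinAt (ℓ.continuous.comp_continuousOn hx.continuousOn)
    (fun _ hs => hx.hasDerivWithinAt_sub_apply hs) ht

theorem IsSolOn.apply_lt_of_apply_zero_lt (hx : IsSolOn (radialField lam ℓ) x)
    (h0 : ℓ (x 0) < lam) {t : ℝ} (ht : 0 ≤ t) : ℓ (x t) < lam := by
  have hgap : 0 < lam - ℓ (x t) := by
    rw [hx.sub_apply_eq_mul_exp ht]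
    exact mul_pos (sub_pos.2 h0) (Real.exp_pos _)
  linarith

theorem IsSolOn.apply_zero_lt_of_tendsto (hlam : 0 < lam) (hx : IsSolOn (radialField lam ℓ) x)
    (hlim : Tendsto x atTop (nhds 0)) : ℓ (x 0) < lam := by
  have hℓ : ∀ᶠ t in atTop, ℓ (x t) < lam :=
    (map_zero ℓ ▸ (ℓ.continuous.tendsto 0).comp hlim).eventually_lt_const hlam
  obtain ⟨T, hT, hT0⟩ := (hℓ.and (eventually_ge_atTop 0)).exists
  have hgap : 0 < (lam - ℓ (x 0)) * Real.exp (∫ s in (0:ℝ)..T, ℓ (x s)) := by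
    rw [← hx.sub_apply_eq_mul_exp hT0]
    linarith
  linarith [pos_of_mul_pos_left hgap (Real.exp_pos _).le]

theorem isSolOn_radialField_radialScale_smul (hlam : 0 < lam) {x₀ : E} (hx₀ : ℓ x₀ < lam) :
    IsSolOn (radialField lam ℓ) (fun t => radialScale lam (ℓ x₀) t • x₀) := by
  intro t ht
  refine ((hasDerivAt_radialScale hlam hx₀ ht).smul_const x₀).hasDerivWithinAt.congr_deriv ?_
  simp only [radialField, map_smul, smul_eq_mul, smul_smul]
  ring_nf

theorem domAttr_radialField (hlam : 0 < lam) : domAttr (radialField lam ℓ) = {x | ℓ x < lam} := by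
  ext x₀
  constructor
  · rintro ⟨x, rfl, hx, hlim⟩
    exact hx.apply_zero_lt_of_tendsto hlam hlim
  · intro hx₀
    refine ⟨fun t => radialScale lam (ℓ x₀) t • x₀, by simp [radialScale_zero hlam.ne'],
      isSolOn_radialField_radialScale_smul hlam hx₀, ?_⟩
    simpa using (tendsto_radialScale_atTop hlam hx₀).smul_const x₀

end RadialField

theorem domain_of_attraction_is_halfplane
    (lam ρ₁ ρ₂ : ℝ) (hlam : 0 < lam)
    (f : EuclideanSpace ℝ (Fin 2) → EuclideanSpace ℝ (Fin 2))
    (hf : ∀ x : EuclideanSpace ℝ (Fin 2),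
      f x = (WithLp.equiv 2 (Fin 2 → ℝ)).symm
        ![-lam * x 0 + ρ₁ * x 0 ^ 2 + ρ₂ * x 0 * x 1,
          -lam * x 1 + ρ₁ * x 0 * x 1 + ρ₂ * x 1 ^ 2])
    (H : Set (EuclideanSpace ℝ (Fin 2)))
    (hH : H = {x : EuclideanSpace ℝ (Fin 2) | ρ₁ * x 0 + ρ₂ * x 1 < lam}) :
    -- H is positively invariant
    (∀ x : ℝ → EuclideanSpace ℝ (Fin 2), IsSolOn f x → x 0 ∈ H → ∀ t ≥ 0, x t ∈ H) ∧
    -- and H is the domain of attraction of the origin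
    H = domAttr f := by
  set ℓ : EuclideanSpace ℝ (Fin 2) →L[ℝ] ℝ :=
    ρ₁ • EuclideanSpace.proj (0 : Fin 2) + ρ₂ • EuclideanSpace.proj (1 : Fin 2)
  have hℓ (x : EuclideanSpace ℝ (Fin 2)) : ℓ x = ρ₁ * x 0 + ρ₂ * x 1 := rfl
  have hfield : f = radialField lam ℓ := by
    funext x
    rw [hf]
    ext i
    fin_cases i <;>
      simp only [WithLp.equiv_symm_apply, PiLp.toLp_apply, Fin.zero_eta, Fin.mk_one,
        Matrix.cons_val_zero, Matrix.cons_val_one, Matrix.cons_val_fin_one, radialField, hℓ,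
        PiLp.smul_apply, smul_eq_mul] <;> ring
  have hHℓ : H = {x | ℓ x < lam} := hH
  subst hfield hHℓ
  exact ⟨fun x hx h0 t ht => hx.apply_lt_of_apply_zero_lt h0 ht, (domAttr_radialField hlam).symm⟩
end
end
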